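/- For all y > 0, λ_B(y) ≤ 2·(1 + |log y|)·(√y − 1)^2, where λ_B(y) = y·log y − y + 1. -/

import Mathlib

/-!
Write `y = s ^ 2`, so that `λ_B(y) = 2 s² log s - s² + 1` and the claim becomes a polynomial
inequality in `s` and `log s`. It follows from the two sharp rational bounds on the logarithm
near `1`: `log s ≤ (s - s⁻¹) / 2` for `s ≥ 1` (that is, `x ≤ sinh x` for `x ≥ 0`), and
`log s ≤ 2 (s - 1) / (s + 1)` for `s ≤ 1` (the first term of the `artanh` series).
-/

/-- The Boltzmann function. -/
noncomputable def lamB (y : ℝ) : ℝ := y * Real.log y - y + 1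

open Real

theorem log_le_sub_inv_div_two {x : ℝ} (hx : 1 ≤ x) : log x ≤ (x - x⁻¹) / 2 :=
  sinh_log (by positivity) ▸ self_le_sinh_iff.2 (log_nonneg hx)

theorem two_div_two_mul_add_one_le_log_one_add_inv {a : ℝ} (ha : 0 < a) :
    2 / (2 * a + 1) ≤ log (1 + a⁻¹) := by
  simpa [div_eq_mul_inv] using le_hasSum (hasSum_log_one_add_inv ha) 0 fun k _ ↦ by positivity

theorem log_le_two_mul_sub_one_div_add_one {x : ℝ} (hx₀ : 0 < x) (hx₁ : x ≤ 1) :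
    log x ≤ 2 * (x - 1) / (x + 1) := by
  rcases hx₁.eq_or_lt with rfl | hx₁
  · simp
  have h := two_div_two_mul_add_one_le_log_one_add_inv (div_pos hx₀ (sub_pos.2 hx₁))
  have h_arg : 1 + (x / (1 - x))⁻¹ = x⁻¹ := by field_simp; ring
  have h_bound : 2 / (2 * (x / (1 - x)) + 1) = -(2 * (x - 1) / (x + 1)) := by
    field_simp
    ring
  rw [h_arg, h_bound, log_inv] at h
  linarith

theorem lamB_sq_le_of_one_le {s : ℝ} (hs : 1 ≤ s) :
    lamB (s ^ 2) ≤ 2 * (1 + 2 * log s) * (s - 1) ^ 2 := by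
  have hs₀ : 0 < s := by linarith
  have h : 2 * s * log s ≤ s ^ 2 - 1 :=
    calc 2 * s * log s ≤ 2 * s * ((s - s⁻¹) / 2) := by gcongr; exact log_le_sub_inv_div_two hs
      _ = s ^ 2 - 1 := by field_simp
  rw [lamB, log_pow, Nat.cast_ofNat]
  refine le_of_sub_nonneg (nonneg_of_mul_nonneg_right ?_ (by positivity : 0 < s * (s + 1)))
  -- s (s + 1) (rhs - lhs) = s (3s - 1) (s² - 1 - 2 s log s) + 2 s (s - 1)² (s + 2) log s
  nlinarith [mul_nonneg (by nlinarith : 0 ≤ s * (3 * s - 1)) (sub_nonneg.2 h),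
    mul_nonneg (by positivity : 0 ≤ s * (s - 1) ^ 2 * (s + 2)) (log_nonneg hs)]

theorem lamB_sq_le_of_le_one {s : ℝ} (hs₀ : 0 < s) (hs₁ : s ≤ 1) :
    lamB (s ^ 2) ≤ 2 * (1 - 2 * log s) * (s - 1) ^ 2 := by
  have h : log s * (s + 1) ≤ 2 * (s - 1) :=
    (le_div_iff₀ (by linarith)).1 (log_le_two_mul_sub_one_div_add_one hs₀ hs₁)
  rw [lamB, log_pow, Nat.cast_ofNat]
  refine le_of_sub_nonneg (nonneg_of_mul_nonneg_right ?_ (by linarith : 0 < s + 1))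
  -- (s + 1) (rhs - lhs) = (6s² - 8s + 4) (2 (s - 1) - (s + 1) log s) + 9 (1 - s)³
  nlinarith [mul_nonneg (by nlinarith : 0 ≤ 6 * s ^ 2 - 8 * s + 4) (sub_nonneg.2 h),
    pow_nonneg (sub_nonneg.2 hs₁) 3]

/-- For all `y > 0`, `λ_B(y) ≤ 2 (1 + |log y|) (√y - 1)^2`. -/
theorem lamB_le (y : ℝ) (hy : 0 < y) :
    lamB y ≤ 2 * (1 + |Real.log y|) * (Real.sqrt y - 1) ^ 2 := by
  obtain ⟨s, hs, rfl⟩ : ∃ s, 0 < s ∧ y = s ^ 2 := ⟨√y, sqrt_pos.2 hy, (sq_sqrt hy.le).symm⟩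
  rw [sqrt_sq hs.le, log_pow, Nat.cast_ofNat]
  rcases le_total 1 s with h | h
  · rw [abs_of_nonneg (by linarith [log_nonneg h])]
    exact lamB_sq_le_of_one_le h
  · rw [abs_of_nonpos (by linarith [log_nonpos hs.le h]), ← sub_eq_add_neg]
    exact lamB_sq_le_of_le_one hs h
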